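/- arXiv:1608.03019 — 2 statements merged into one kernel-verified Lean document; each statement's English description precedes it below -/
import Mathlib

section
/- There exists a constant C ≥ 0, depending only on k0 and k1, such that for every admissible ψ one has |Z(ψ)| ≤ C·D(ψ). Consequently the set { Z(ψ)/D(ψ) : ψ admissible with D(ψ) ≠ 0 } is nonempty and bounded above, so μ_c is a finite real number. -/
open MeasureTheory Set

noncomputable section

/-- A function is admissible if it is twice continuously differentiable on `[0,1]`
and vanishes at the endpoints (the C² representatives of `H₀¹(0,1) ∩ H²(0,1)`). -/
def Admissible (ψ : ℝ → ℝ) : Prop :=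
  ContDiffOn ℝ 2 ψ (Set.Icc (0:ℝ) 1) ∧ ψ 0 = 0 ∧ ψ 1 = 0

/-- The boundary energy `Z(ψ) = k1·ψ′(1)² + k0·ψ′(0)²`. -/
def Z (k0 k1 : ℝ) (ψ : ℝ → ℝ) : ℝ :=
  k1 * (deriv ψ 1) ^ 2 + k0 * (deriv ψ 0) ^ 2

/-- The Dirichlet-type energy `D(ψ) = ∫₀¹ ψ″(y)² dy`. -/
def D (ψ : ℝ → ℝ) : ℝ :=
  ∫ y in (0:ℝ)..1, (deriv (deriv ψ) y) ^ 2

/-- The set of Rayleigh quotients `Z(ψ)/D(ψ)` over admissible `ψ` with `D(ψ) ≠ 0`. -/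
def mucSet (k0 k1 : ℝ) : Set ℝ :=
  { r : ℝ | ∃ ψ : ℝ → ℝ, Admissible ψ ∧ D ψ ≠ 0 ∧ r = Z k0 k1 ψ / D ψ }

/-- The critical viscosity `μ_c`. -/
def muc (k0 k1 : ℝ) : ℝ := sSup (mucSet k0 k1)

/-!
By Rolle's theorem `ψ′` vanishes at some `c ∈ (0,1)`. For every `x ∈ [0,1]` the fundamental
theorem of calculus and Cauchy–Schwarz then give `ψ′(x)² = (∫ₓᶜ ψ″)² ≤ |c - x| ∫ₓᶜ ψ″² ≤ D(ψ)`,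
so `|Z(ψ)| ≤ (|k0| + |k1|) D(ψ)`. The quadratic `y² - y` is admissible with `D = 4`.
-/

theorem sq_intervalIntegral_le_mul_intervalIntegral_sq {a b : ℝ} (hab : a ≤ b) {f : ℝ → ℝ}
    (hf : IntervalIntegrable f volume a b)
    (hf2 : IntervalIntegrable (fun x => f x ^ 2) volume a b) :
    (∫ x in a..b, f x) ^ 2 ≤ (b - a) * ∫ x in a..b, f x ^ 2 := by
  have hquad : ∀ t : ℝ,
      0 ≤ (b - a) * (t * t) + (-2 * ∫ x in a..b, f x) * t + ∫ x in a..b, f x ^ 2 := by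
    intro t
    have hexpand : ∫ x in a..b, (t - f x) ^ 2
        = (b - a) * (t * t) + (-2 * ∫ x in a..b, f x) * t + ∫ x in a..b, f x ^ 2 := by
      simp_rw [sub_sq]
      rw [intervalIntegral.integral_add (intervalIntegrable_const.sub (hf.const_mul _)) hf2,
        intervalIntegral.integral_sub intervalIntegrable_const (hf.const_mul _),
        intervalIntegral.integral_const_mul, intervalIntegral.integral_const, smul_eq_mul]
      ring
    exact hexpand ▸ intervalIntegral.integral_nonneg hab fun x _ => sq_nonneg _
  have := discrim_le_zero hquad
  rw [discrim] at this
  linarith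

theorem sq_sub_le_mul_intervalIntegral_sq_of_hasDerivAt {a b : ℝ} (hab : a ≤ b) {g g' : ℝ → ℝ}
    (hg : ContinuousOn g (Icc a b)) (hderiv : ∀ x ∈ Ioo a b, HasDerivAt g (g' x) x)
    (hg' : ContinuousOn g' (Icc a b)) :
    (g b - g a) ^ 2 ≤ (b - a) * ∫ x in a..b, g' x ^ 2 := by
  have hg'int := hg'.intervalIntegrable_of_Icc (μ := volume) hab
  rw [← intervalIntegral.integral_eq_sub_of_hasDerivAt_of_le hab hg hderiv hg'int]
  exact sq_intervalIntegral_le_mul_intervalIntegral_sq hab hg'int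
    ((hg'.pow 2).intervalIntegrable_of_Icc hab)

theorem D_nonneg (ψ : ℝ → ℝ) : 0 ≤ D ψ :=
  intervalIntegral.integral_nonneg zero_le_one fun _ _ => sq_nonneg _

theorem DifferentiableOn.hasDerivAt_derivWithin_Icc {f : ℝ → ℝ} {a b x : ℝ}
    (hf : DifferentiableOn ℝ f (Icc a b)) (hx : x ∈ Ioo a b) :
    HasDerivAt f (derivWithin f (Icc a b) x) x :=
  (hf x (Ioo_subset_Icc_self hx)).hasDerivWithinAt.hasDerivAt (Icc_mem_nhds hx.1 hx.2)

namespace Admissible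

variable {ψ : ℝ → ℝ} (hψ : Admissible ψ)
include hψ

theorem contDiffOn_derivWithin : ContDiffOn ℝ 1 (derivWithin ψ (Icc 0 1)) (Icc 0 1) :=
  hψ.1.derivWithin (uniqueDiffOn_Icc zero_lt_one) (by norm_num)

theorem D_eq : D ψ = ∫ y in (0:ℝ)..1,
    derivWithin (derivWithin ψ (Icc 0 1)) (Icc 0 1) y ^ 2 := by
  refine intervalIntegral.integral_congr_Ioo_of_le zero_le_one fun y hy => ?_
  have hψ' : deriv ψ =ᶠ[nhds y] derivWithin ψ (Icc 0 1) := by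
    filter_upwards [isOpen_Ioo.mem_nhds hy] with z hz
    exact ((hψ.1.differentiableOn (by norm_num)).hasDerivAt_derivWithin_Icc hz).deriv
  simp only [hψ'.deriv_eq,
    ((hψ.contDiffOn_derivWithin.differentiableOn one_ne_zero).hasDerivAt_derivWithin_Icc hy).deriv]

theorem exists_derivWithin_eq_zero : ∃ c ∈ Ioo (0:ℝ) 1, derivWithin ψ (Icc 0 1) c = 0 :=
  exists_hasDerivAt_eq_zero zero_lt_one hψ.1.continuousOn (hψ.2.1.trans hψ.2.2.symm)
    fun _ hy => (hψ.1.differentiableOn (by norm_num)).hasDerivAt_derivWithin_Icc hy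

theorem sq_derivWithin_sub_le_D {s t : ℝ} (hs : 0 ≤ s) (hst : s ≤ t) (ht : t ≤ 1) :
    (derivWithin ψ (Icc 0 1) t - derivWithin ψ (Icc 0 1) s) ^ 2 ≤ D ψ := by
  set g := derivWithin ψ (Icc 0 1)
  set h := derivWithin g (Icc 0 1)
  have hsub : Icc s t ⊆ Icc 0 1 := Icc_subset_Icc hs ht
  have hg := hψ.contDiffOn_derivWithin
  have hh : ContinuousOn h (Icc 0 1) :=
    hg.continuousOn_derivWithin (uniqueDiffOn_Icc zero_lt_one) le_rfl
  have hint : ∫ x in s..t, h x ^ 2 ≤ ∫ x in (0:ℝ)..1, h x ^ 2 :=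
    intervalIntegral.integral_mono_interval hs hst ht
      (Filter.Eventually.of_forall fun _ => sq_nonneg _)
      ((hh.pow 2).intervalIntegrable_of_Icc zero_le_one)
  calc (g t - g s) ^ 2 ≤ (t - s) * ∫ x in s..t, h x ^ 2 :=
        sq_sub_le_mul_intervalIntegral_sq_of_hasDerivAt hst (hg.continuousOn.mono hsub)
          (fun x hx => (hg.differentiableOn one_ne_zero).hasDerivAt_derivWithin_Icc
            (Ioo_subset_Ioo hs ht hx)) (hh.mono hsub)
    _ ≤ 1 * ∫ x in (0:ℝ)..1, h x ^ 2 :=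
        mul_le_mul (by linarith) hint
          (intervalIntegral.integral_nonneg hst fun _ _ => sq_nonneg _) zero_le_one
    _ = D ψ := by rw [one_mul, hψ.D_eq]

theorem sq_derivWithin_le_D {x : ℝ} (hx : x ∈ Icc (0:ℝ) 1) :
    derivWithin ψ (Icc 0 1) x ^ 2 ≤ D ψ := by
  obtain ⟨c, hc, hgc⟩ := hψ.exists_derivWithin_eq_zero
  rcases le_total x c with hxc | hcx
  · simpa [hgc] using hψ.sq_derivWithin_sub_le_D hx.1 hxc hc.2.le
  · simpa [hgc] using hψ.sq_derivWithin_sub_le_D hc.1.le hcx hx.2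

/-- `deriv ψ x` is the two-sided derivative: at an endpoint where `ψ` is not differentiable it is
the junk value `0`, and `D ψ ≥ 0` covers that case. -/
theorem sq_deriv_le_D {x : ℝ} (hx : x ∈ Icc (0:ℝ) 1) : deriv ψ x ^ 2 ≤ D ψ := by
  by_cases hd : DifferentiableAt ℝ ψ x
  · rw [← hd.derivWithin (uniqueDiffOn_Icc zero_lt_one x hx)]
    exact hψ.sq_derivWithin_le_D hx
  · simpa [deriv_zero_of_not_differentiableAt hd] using D_nonneg ψ

theorem abs_Z_le (k0 k1 : ℝ) : |Z k0 k1 ψ| ≤ (|k0| + |k1|) * D ψ := by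
  have h0 := hψ.sq_deriv_le_D (x := 0) (by norm_num)
  have h1 := hψ.sq_deriv_le_D (x := 1) (by norm_num)
  calc |Z k0 k1 ψ| ≤ |k1| * deriv ψ 1 ^ 2 + |k0| * deriv ψ 0 ^ 2 := by
        rw [Z]
        exact (abs_add_le _ _).trans_eq (by rw [abs_mul, abs_mul, abs_sq, abs_sq])
    _ ≤ |k1| * D ψ + |k0| * D ψ := by gcongr
    _ = (|k0| + |k1|) * D ψ := by ring

end Admissible

theorem admissible_sq_sub_self : Admissible fun y => y ^ 2 - y :=
  ⟨((contDiff_id.pow 2).sub contDiff_id).contDiffOn, by norm_num, by norm_num⟩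

theorem D_sq_sub_self : D (fun y => y ^ 2 - y) = 4 := by
  have hderiv : deriv (fun y : ℝ => y ^ 2 - y) = fun y => 2 * y - 1 := by funext y; simp
  have hderiv2 : deriv (fun y : ℝ => 2 * y - 1) = fun _ => 2 := by funext y; simp
  simp only [D, hderiv, hderiv2]
  norm_num

/-- there is a constant `C ≥ 0`, depending only on `k0` and `k1`,
with `|Z(ψ)| ≤ C·D(ψ)` for every admissible `ψ`; consequently the set of Rayleigh
quotients defining `μ_c` is nonempty and bounded above (so `μ_c` is a finite real). -/
theorem mucSet_bound (k0 k1 : ℝ) :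
    (∃ C : ℝ, 0 ≤ C ∧ ∀ ψ : ℝ → ℝ, Admissible ψ → |Z k0 k1 ψ| ≤ C * D ψ) ∧
    (mucSet k0 k1).Nonempty ∧ BddAbove (mucSet k0 k1) := by
  refine ⟨⟨|k0| + |k1|, by positivity, fun ψ hψ => hψ.abs_Z_le k0 k1⟩,
    ⟨_, _, admissible_sq_sub_self, by norm_num [D_sq_sub_self], rfl⟩, ⟨|k0| + |k1|, ?_⟩⟩
  rintro _ ⟨ψ, hψ, hD, rfl⟩
  rw [div_le_iff₀ ((D_nonneg ψ).lt_of_ne' hD)]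
  exact (le_abs_self _).trans (hψ.abs_Z_le k0 k1)
end
end

section
/- Assume μ_c > 0 and 0 < μ < μ_c. Then the function N* is strictly decreasing on [0, ∞): for all 0 ≤ s₁ < s₂ one has N*(s₁) > N*(s₂). -/
open MeasureTheory Set

noncomputable section

/-- The energy functional `E_s(ψ)` (with `s = ξ²` the squared frequency). -/
def E (k0 k1 μ s : ℝ) (ψ : ℝ → ℝ) : ℝ :=
  μ / 2 * ∫ y in (0:ℝ)..1,
      ((deriv (deriv ψ) y) ^ 2 + 2 * s * (deriv ψ y) ^ 2 + s ^ 2 * (ψ y) ^ 2)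
  - k1 / 2 * (deriv ψ 1) ^ 2 - k0 / 2 * (deriv ψ 0) ^ 2

/-- The constraint functional `J_s(ψ)`. -/
def J (s : ℝ) (ψ : ℝ → ℝ) : ℝ :=
  1 / 2 * ∫ y in (0:ℝ)..1, (s * (ψ y) ^ 2 + (deriv ψ y) ^ 2)

/-- The constant `C₀ = |k1 + k0| + μ⁻¹·max(k0², k1²)`. -/
def C0 (k0 k1 μ : ℝ) : ℝ := |k1 + k0| + μ⁻¹ * max (k0 ^ 2) (k1 ^ 2)

/-- A function is nonzero on `[0,1]` if it does not vanish identically there. -/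
def NonzeroOn01 (ψ : ℝ → ℝ) : Prop := ∃ y ∈ Set.Icc (0:ℝ) 1, ψ y ≠ 0

/-- The set of quotients defining the modified variational problem `N*(s)`. -/
def NstarSet (k0 k1 μ s : ℝ) : Set ℝ :=
  { r : ℝ | ∃ ψ : ℝ → ℝ, Admissible ψ ∧ NonzeroOn01 ψ ∧
      r = (Z k0 k1 ψ - μ * D ψ) /
        (μ * ∫ y in (0:ℝ)..1, (2 * (deriv ψ y) ^ 2 + s * (ψ y) ^ 2)) }

/-- The modified variational quantity `N*(s)`. -/
def Nstar (k0 k1 μ s : ℝ) : ℝ := sSup (NstarSet k0 k1 μ s)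

/-- The set of quotients `−E_s(ψ)/J_s(ψ)` defining the growth rate `λ(s)`. -/
def lamSet (k0 k1 μ s : ℝ) : Set ℝ :=
  { r : ℝ | ∃ ψ : ℝ → ℝ, Admissible ψ ∧ NonzeroOn01 ψ ∧
      r = -E k0 k1 μ s ψ / J s ψ }

/-- The growth rate `λ(s) = sup(−E_s(ψ)/J_s(ψ))`. -/
def lam (k0 k1 μ s : ℝ) : ℝ := sSup (lamSet k0 k1 μ s)

end


open Topology Filter

private lemma integral_congr_Ioo {f g : ℝ → ℝ} (h : ∀ y ∈ Ioo (0:ℝ) 1, f y = g y) :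
    ∫ y in (0:ℝ)..1, f y = ∫ y in (0:ℝ)..1, g y := by
  apply intervalIntegral.integral_congr_ae
  have h0 : ∀ᵐ (y:ℝ), y ≠ 1 := by
    have h1 : (volume ({1} : Set ℝ)) = 0 := measure_singleton 1
    filter_upwards [MeasureTheory.measure_eq_zero_iff_ae_notMem.mp h1] with y hy
    simpa using hy
  filter_upwards [h0] with y hy hmem
  rw [uIoc_of_le (by norm_num : (0:ℝ) ≤ 1)] at hmem
  exact h y ⟨hmem.1, lt_of_le_of_ne hmem.2 hy⟩

private lemma contIntInt {f : ℝ → ℝ} (hf : ContinuousOn f (Icc (0:ℝ) 1)) :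
    IntervalIntegrable f volume 0 1 := hf.intervalIntegrable_of_Icc (by norm_num)

private lemma cs_integral {f g : ℝ → ℝ} (hf : ContinuousOn f (Icc (0:ℝ) 1))
    (hg : ContinuousOn g (Icc (0:ℝ) 1)) :
    (∫ y in (0:ℝ)..1, f y * g y)^2 ≤
      (∫ y in (0:ℝ)..1, (f y)^2) * (∫ y in (0:ℝ)..1, (g y)^2) := by
  set A := ∫ y in (0:ℝ)..1, (f y)^2 with hA
  set B := ∫ y in (0:ℝ)..1, (g y)^2 with hB
  set C := ∫ y in (0:ℝ)..1, f y * g y with hC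
  have iff2 : IntervalIntegrable (fun y => (f y)^2) volume 0 1 := contIntInt (hf.pow 2)
  have igg2 : IntervalIntegrable (fun y => (g y)^2) volume 0 1 := contIntInt (hg.pow 2)
  have ifg : IntervalIntegrable (fun y => f y * g y) volume 0 1 := contIntInt (hf.mul hg)
  have hBnn : 0 ≤ B := intervalIntegral.integral_nonneg (by norm_num) (fun u _ => sq_nonneg _)
  have key : ∀ t : ℝ, 0 ≤ A*t^2 + 2*C*t + B := by
    intro t
    have h1 : 0 ≤ ∫ y in (0:ℝ)..1, (t * f y + g y)^2 :=
      intervalIntegral.integral_nonneg (by norm_num) (fun u _ => sq_nonneg _)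
    have h2 : ∫ y in (0:ℝ)..1, (t * f y + g y)^2
        = ∫ y in (0:ℝ)..1, (t^2 * (f y)^2 + ((2*t) * (f y * g y) + (g y)^2)) :=
      intervalIntegral.integral_congr (fun y _ => by ring)
    rw [h2, intervalIntegral.integral_add ((iff2.const_mul _)) ((ifg.const_mul _).add igg2),
      intervalIntegral.integral_add (ifg.const_mul _) igg2,
      intervalIntegral.integral_const_mul, intervalIntegral.integral_const_mul] at h1
    linarith
  by_cases hA0 : A = 0
  · by_cases hC0 : C = 0
    · rw [hC0, hA0]; nlinarith
    · exfalso
      have h3 := key (-(B+1)/(2*C))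
      rw [hA0] at h3
      have : 2*C*(-(B+1)/(2*C)) = -(B+1) := by field_simp
      nlinarith
  · have hAnn : 0 ≤ A := intervalIntegral.integral_nonneg (by norm_num) (fun u _ => sq_nonneg _)
    have hApos : 0 < A := lt_of_le_of_ne hAnn (Ne.symm hA0)
    have h3 := key (-(C/A))
    have h4 : 0 ≤ A * (A*(-(C/A))^2 + 2*C*(-(C/A)) + B) := mul_nonneg hApos.le h3
    have h5 : A * (A*(-(C/A))^2 + 2*C*(-(C/A)) + B) = A*B - C^2 := by field_simp; ring
    linarith

private lemma integral_sq_pos {f : ℝ → ℝ} (hf : ContinuousOn f (Icc (0:ℝ) 1)) {y₀ : ℝ}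
    (hy₀ : y₀ ∈ Ioo (0:ℝ) 1) (hne : f y₀ ≠ 0) : 0 < ∫ y in (0:ℝ)..1, (f y)^2 := by
  have hfi : IntervalIntegrable (fun y => (f y)^2) volume 0 1 := contIntInt (hf.pow 2)
  rw [intervalIntegral.integral_pos_iff_support_of_nonneg_ae
    (Filter.Eventually.of_forall (fun y => sq_nonneg _)) hfi]
  refine ⟨by norm_num, ?_⟩
  have hca : ContinuousAt f y₀ :=
    (hf y₀ (Ioo_subset_Icc_self hy₀)).continuousAt (Icc_mem_nhds hy₀.1 hy₀.2)
  have hnb : {y | f y ≠ 0} ∩ Ioo 0 1 ∈ 𝓝 y₀ :=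
    Filter.inter_mem (hca.eventually_ne hne) (isOpen_Ioo.mem_nhds hy₀)
  obtain ⟨ε, hε, hball⟩ := Metric.mem_nhds_iff.mp hnb
  have hsub : Metric.ball y₀ ε ⊆ Function.support (fun y => (f y)^2) ∩ Ioc 0 1 := by
    intro y hy
    obtain ⟨h1, h2⟩ := hball hy
    exact ⟨pow_ne_zero _ h1, Ioo_subset_Ioc_self h2⟩
  exact lt_of_lt_of_le (Metric.measure_ball_pos volume y₀ hε) (measure_mono hsub)

private lemma master (ψ : ℝ → ℝ) (hc : ContDiffOn ℝ 2 ψ (Icc (0:ℝ) 1))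
    (h0 : ψ 0 = 0) (h1 : ψ 1 = 0) {y₀ : ℝ} (hy₀m : y₀ ∈ Icc (0:ℝ) 1) (hy₀ : ψ y₀ ≠ 0)
    (k0 k1 : ℝ) :
    ∃ a b d : ℝ, 0 < a ∧ 0 < b ∧ 0 ≤ d ∧ b^2 ≤ a*d ∧
      (∫ y in (0:ℝ)..1, (deriv (deriv ψ) y)^2) = d ∧
      (∀ s : ℝ, (∫ y in (0:ℝ)..1, (2*(deriv ψ y)^2 + s*(ψ y)^2)) = 2*b + s*a) ∧
      k1 * (deriv ψ 1)^2 + k0 * (deriv ψ 0)^2 ≤ 2*(|k0|+|k1|) * Real.sqrt (b*d) := by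
  have hI : UniqueDiffOn ℝ (Icc (0:ℝ) 1) := uniqueDiffOn_Icc zero_lt_one
  set g := derivWithin ψ (Icc (0:ℝ) 1) with hgdef
  set h := derivWithin g (Icc (0:ℝ) 1) with hhdef
  have hψc : ContinuousOn ψ (Icc (0:ℝ) 1) := hc.continuousOn
  have hgC1 : ContDiffOn ℝ 1 g (Icc (0:ℝ) 1) := hc.derivWithin hI (by norm_num)
  have hgc : ContinuousOn g (Icc (0:ℝ) 1) := hgC1.continuousOn
  have hhc : ContinuousOn h (Icc (0:ℝ) 1) := hgC1.continuousOn_derivWithin hI le_rfl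
  have hmem : ∀ y ∈ Ioo (0:ℝ) 1, Icc (0:ℝ) 1 ∈ 𝓝 y := fun y hy => Icc_mem_nhds hy.1 hy.2
  have hdψ : ∀ y ∈ Ioo (0:ℝ) 1, HasDerivAt ψ (g y) y := fun y hy =>
    ((hc.differentiableOn (by norm_num) y (Ioo_subset_Icc_self hy)).hasDerivWithinAt).hasDerivAt
      (hmem y hy)
  have hdg : ∀ y ∈ Ioo (0:ℝ) 1, HasDerivAt g (h y) y := fun y hy =>
    ((hgC1.differentiableOn one_ne_zero y (Ioo_subset_Icc_self hy)).hasDerivWithinAt).hasDerivAt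
      (hmem y hy)
  have hderiv1 : ∀ y ∈ Ioo (0:ℝ) 1, deriv ψ y = g y := fun y hy => (hdψ y hy).deriv
  have hderiv2 : ∀ y ∈ Ioo (0:ℝ) 1, deriv (deriv ψ) y = h y := by
    intro y hy
    have hev : deriv ψ =ᶠ[𝓝 y] g := by
      filter_upwards [isOpen_Ioo.mem_nhds hy] with z hz using hderiv1 z hz
    rw [hev.deriv_eq]
    exact (hdg y hy).deriv
  set a := ∫ y in (0:ℝ)..1, (ψ y)^2 with hadef
  set b := ∫ y in (0:ℝ)..1, (g y)^2 with hbdef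
  set d := ∫ y in (0:ℝ)..1, (h y)^2 with hddef
  have iψ2 : IntervalIntegrable (fun y => (ψ y)^2) volume 0 1 := contIntInt (hψc.pow 2)
  have ig2 : IntervalIntegrable (fun y => (g y)^2) volume 0 1 := contIntInt (hgc.pow 2)
  have ih2 : IntervalIntegrable (fun y => (h y)^2) volume 0 1 := contIntInt (hhc.pow 2)
  have iψh : IntervalIntegrable (fun y => ψ y * h y) volume 0 1 := contIntInt (hψc.mul hhc)
  have hbnn : 0 ≤ b := intervalIntegral.integral_nonneg (by norm_num) (fun u _ => sq_nonneg _)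
  have hdnn : 0 ≤ d := intervalIntegral.integral_nonneg (by norm_num) (fun u _ => sq_nonneg _)
  -- a > 0
  have hy₀i : y₀ ∈ Ioo (0:ℝ) 1 := by
    rcases hy₀m with ⟨hl, hr⟩
    constructor
    · rcases lt_or_eq_of_le hl with h' | h'
      · exact h'
      · exact absurd (h' ▸ h0) hy₀
    · rcases lt_or_eq_of_le hr with h' | h'
      · exact h'
      · exact absurd (h' ▸ h1) hy₀
  have hapos : 0 < a := integral_sq_pos hψc hy₀i hy₀
  have hbpos : 0 < b := by
    rcases lt_or_ge 0 b with hb | hb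
    · exact hb
    have hb0 : b = 0 := le_antisymm (le_of_not_gt (fun hh => absurd hh (not_lt.mpr hb))) hbnn
    exfalso
    have hgIoo : ∀ y ∈ Ioo (0:ℝ) 1, g y = 0 := by
      intro y hy
      by_contra hgy
      have hpos : 0 < b := by rw [hbdef]; exact integral_sq_pos hgc hy hgy
      linarith
    have hy0lt : (0:ℝ) < y₀ := hy₀i.1
    have hsub : Icc (0:ℝ) y₀ ⊆ Icc (0:ℝ) 1 := Icc_subset_Icc le_rfl hy₀i.2.le
    have hftc : ∫ y in (0:ℝ)..y₀, g y = ψ y₀ - ψ 0 :=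
      intervalIntegral.integral_eq_sub_of_hasDeriv_right_of_le hy0lt.le (hψc.mono hsub)
        (fun y hy => (hdψ y ⟨hy.1, hy.2.trans hy₀i.2⟩).hasDerivWithinAt)
        ((contIntInt hgc).mono_set
          (by rw [uIcc_of_le hy0lt.le, uIcc_of_le (by norm_num : (0:ℝ) ≤ 1)]; exact hsub))
    have hzero : ∫ y in (0:ℝ)..y₀, g y = 0 := by
      rw [intervalIntegral.integral_of_le hy0lt.le]
      have heq : EqOn g (fun _ => (0:ℝ)) (Ioc 0 y₀) := fun y hy =>
        hgIoo y ⟨hy.1, lt_of_le_of_lt hy.2 hy₀i.2⟩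
      rw [MeasureTheory.setIntegral_congr_fun measurableSet_Ioc heq]
      simp
    rw [hzero, h0] at hftc
    exact hy₀ (by linarith)
  -- integration by parts : b = - ∫ ψ h
  have parts : ∫ y in (0:ℝ)..1, ((g y)^2 + ψ y * h y) = ψ 1 * g 1 - ψ 0 * g 0 := by
    apply intervalIntegral.integral_eq_sub_of_hasDeriv_right_of_le (by norm_num)
      (hψc.mul hgc)
    · intro y hy
      have := ((hdψ y hy).mul (hdg y hy)).hasDerivWithinAt (s := Ioi y)
      simpa [pow_two, mul_comm] using this
    · exact ig2.add iψh
  rw [intervalIntegral.integral_add ig2 iψh, h0, h1] at parts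
  have hCb : ∫ y in (0:ℝ)..1, ψ y * h y = -b := by linarith [parts]
  have hb2ad : b^2 ≤ a*d := by
    have := cs_integral hψc hhc
    rw [hCb] at this
    nlinarith
  -- D = d
  have hDd : (∫ y in (0:ℝ)..1, (deriv (deriv ψ) y)^2) = d :=
    integral_congr_Ioo (fun y hy => by rw [hderiv2 y hy])
  -- denominators
  have hden : ∀ s : ℝ, (∫ y in (0:ℝ)..1, (2*(deriv ψ y)^2 + s*(ψ y)^2)) = 2*b + s*a := by
    intro s
    have e1 : (∫ y in (0:ℝ)..1, (2*(deriv ψ y)^2 + s*(ψ y)^2))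
        = ∫ y in (0:ℝ)..1, (2*(g y)^2 + s*(ψ y)^2) :=
      integral_congr_Ioo (fun y hy => by rw [hderiv1 y hy])
    rw [e1, intervalIntegral.integral_add (ig2.const_mul 2) (iψ2.const_mul s),
      intervalIntegral.integral_const_mul, intervalIntegral.integral_const_mul]
  -- endpoint derivatives
  have e0 : (deriv ψ 0)^2 ≤ (g 0)^2 := by
    by_cases hdiff : DifferentiableAt ℝ ψ 0
    · have : derivWithin ψ (Icc (0:ℝ) 1) 0 = deriv ψ 0 :=
        (hdiff.hasDerivAt.hasDerivWithinAt).derivWithin (hI 0 ⟨le_refl 0, by norm_num⟩)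
      rw [hgdef, this]
    · rw [deriv_zero_of_not_differentiableAt hdiff]
      simpa using sq_nonneg (g 0)
  have e1' : (deriv ψ 1)^2 ≤ (g 1)^2 := by
    by_cases hdiff : DifferentiableAt ℝ ψ 1
    · have : derivWithin ψ (Icc (0:ℝ) 1) 1 = deriv ψ 1 :=
        (hdiff.hasDerivAt.hasDerivWithinAt).derivWithin (hI 1 ⟨by norm_num, le_refl 1⟩)
      rw [hgdef, this]
    · rw [deriv_zero_of_not_differentiableAt hdiff]
      simpa using sq_nonneg (g 1)
  -- Rolle point
  obtain ⟨c, hcmem, hgc0⟩ :=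
    exists_hasDerivAt_eq_zero (by norm_num : (0:ℝ) < 1) hψc (h0.trans h1.symm) hdψ
  -- the full integral ∫₀¹ 2|g||h| bounds
  have iagh : IntervalIntegrable (fun y => 2*(|g y| * |h y|)) volume 0 1 :=
    contIntInt (continuousOn_const.mul ((hgc.abs).mul (hhc.abs)))
  have icgh : IntervalIntegrable (fun y => 2*(g y * h y)) volume 0 1 :=
    contIntInt (continuousOn_const.mul (hgc.mul hhc))
  have habs_nonneg : ∀ y : ℝ, 0 ≤ 2*(|g y| * |h y|) := fun y => by positivity
  have hsqrt : ∫ y in (0:ℝ)..1, 2*(|g y| * |h y|) ≤ 2 * Real.sqrt (b*d) := by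
    rw [intervalIntegral.integral_const_mul]
    have hIabs : (∫ y in (0:ℝ)..1, |g y| * |h y|) ^ 2 ≤ b * d := by
      have := cs_integral hgc.abs hhc.abs
      simpa [sq_abs] using this
    have hInn : 0 ≤ ∫ y in (0:ℝ)..1, |g y| * |h y| :=
      intervalIntegral.integral_nonneg (by norm_num) (fun u _ => by positivity)
    have := (Real.le_sqrt hInn (mul_nonneg hbnn hdnn)).mpr hIabs
    linarith
  -- FTC trace bounds
  have trace : ∀ u v : ℝ, 0 ≤ u → u ≤ v → v ≤ 1 →
      (g v)^2 - (g u)^2 = ∫ y in u..v, 2*(g y * h y) := by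
    intro u v hu huv hv
    have hsub : Icc u v ⊆ Icc (0:ℝ) 1 := Icc_subset_Icc hu hv
    have := intervalIntegral.integral_eq_sub_of_hasDeriv_right_of_le huv
      (f := fun y => (g y)^2) (f' := fun y => 2*(g y * h y))
      (((hgc.mono hsub).pow 2))
      (fun y hy => by
        have hyI : y ∈ Ioo (0:ℝ) 1 := ⟨lt_of_le_of_lt hu hy.1, lt_of_lt_of_le hy.2 hv⟩
        have H := ((hdg y hyI).fun_pow 2).hasDerivWithinAt (s := Ioi y)
        convert H using 1
        ring)
      (icgh.mono_set
        (by rw [uIcc_of_le huv, uIcc_of_le (by norm_num : (0:ℝ) ≤ 1)]; exact hsub))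
    simpa using this.symm
  have tbound : ∀ u v : ℝ, 0 ≤ u → u ≤ v → v ≤ 1 →
      |∫ y in u..v, 2*(g y * h y)| ≤ 2 * Real.sqrt (b*d) := by
    intro u v hu huv hv
    have hsub : Icc u v ⊆ Icc (0:ℝ) 1 := Icc_subset_Icc hu hv
    have i1 : IntervalIntegrable (fun y => 2*(g y * h y)) volume u v :=
      icgh.mono_set
        (by rw [uIcc_of_le huv, uIcc_of_le (by norm_num : (0:ℝ) ≤ 1)]; exact hsub)
    have h1' : |∫ y in u..v, 2*(g y * h y)| ≤ ∫ y in u..v, |2*(g y * h y)| :=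
      intervalIntegral.abs_integral_le_integral_abs huv
    have h2' : (∫ y in u..v, |2*(g y * h y)|) = ∫ y in u..v, 2*(|g y| * |h y|) := by
      apply intervalIntegral.integral_congr
      intro y _
      show |2*(g y * h y)| = 2*(|g y| * |h y|)
      rw [abs_mul, abs_mul]
      norm_num
    have iuv : IntervalIntegrable (fun y => 2*(|g y| * |h y|)) volume u v :=
      iagh.mono_set (by rw [uIcc_of_le huv, uIcc_of_le (by norm_num : (0:ℝ) ≤ 1)]; exact hsub)
    have iu0 : IntervalIntegrable (fun y => 2*(|g y| * |h y|)) volume 0 u :=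
      iagh.mono_set (by
        rw [uIcc_of_le hu, uIcc_of_le (by norm_num : (0:ℝ) ≤ 1)]
        exact Icc_subset_Icc le_rfl (huv.trans hv))
    have iv1 : IntervalIntegrable (fun y => 2*(|g y| * |h y|)) volume v 1 :=
      iagh.mono_set (by
        rw [uIcc_of_le hv, uIcc_of_le (by norm_num : (0:ℝ) ≤ 1)]
        exact Icc_subset_Icc (hu.trans huv) le_rfl)
    have h3' : (∫ y in u..v, 2*(|g y| * |h y|)) ≤ ∫ y in (0:ℝ)..1, 2*(|g y| * |h y|) := by
      have e : (∫ y in (0:ℝ)..1, 2*(|g y| * |h y|))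
          = (∫ y in (0:ℝ)..u, 2*(|g y| * |h y|)) + (∫ y in u..v, 2*(|g y| * |h y|))
            + (∫ y in v..(1:ℝ), 2*(|g y| * |h y|)) := by
        rw [intervalIntegral.integral_add_adjacent_intervals iu0 iuv,
          intervalIntegral.integral_add_adjacent_intervals (iu0.trans iuv) iv1]
      have n1 : 0 ≤ ∫ y in (0:ℝ)..u, 2*(|g y| * |h y|) :=
        intervalIntegral.integral_nonneg hu (fun y _ => habs_nonneg y)
      have n2 : 0 ≤ ∫ y in v..(1:ℝ), 2*(|g y| * |h y|) :=
        intervalIntegral.integral_nonneg hv (fun y _ => habs_nonneg y)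
      linarith
    calc |∫ y in u..v, 2*(g y * h y)| ≤ ∫ y in u..v, |2*(g y * h y)| := h1'
      _ = ∫ y in u..v, 2*(|g y| * |h y|) := h2'
      _ ≤ ∫ y in (0:ℝ)..1, 2*(|g y| * |h y|) := h3'
      _ ≤ 2 * Real.sqrt (b*d) := hsqrt
  have tr0 : (g 0)^2 ≤ 2 * Real.sqrt (b*d) := by
    have ht := trace 0 c le_rfl hcmem.1.le hcmem.2.le
    have hb := tbound 0 c le_rfl hcmem.1.le hcmem.2.le
    rw [hgc0] at ht
    have := abs_le.mp hb
    nlinarith [this.1, this.2]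
  have tr1 : (g 1)^2 ≤ 2 * Real.sqrt (b*d) := by
    have ht := trace c 1 hcmem.1.le hcmem.2.le le_rfl
    have hb := tbound c 1 hcmem.1.le hcmem.2.le le_rfl
    rw [hgc0] at ht
    have := abs_le.mp hb
    nlinarith [this.1, this.2]
  refine ⟨a, b, d, hapos, hbpos, hdnn, hb2ad, hDd, hden, ?_⟩
  have hsq0 : (deriv ψ 0)^2 ≤ 2 * Real.sqrt (b*d) := le_trans e0 tr0
  have hsq1 : (deriv ψ 1)^2 ≤ 2 * Real.sqrt (b*d) := le_trans e1' tr1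
  have hs0 : 0 ≤ (deriv ψ 0)^2 := sq_nonneg _
  have hs1 : 0 ≤ (deriv ψ 1)^2 := sq_nonneg _
  have hk0 : k0 ≤ |k0| := le_abs_self k0
  have hk1 : k1 ≤ |k1| := le_abs_self k1
  have hk0n : 0 ≤ |k0| := abs_nonneg k0
  have hk1n : 0 ≤ |k1| := abs_nonneg k1
  nlinarith [mul_le_mul_of_nonneg_left hsq0 hk0n, mul_le_mul_of_nonneg_left hsq1 hk1n,
    mul_le_mul_of_nonneg_right hk0 hs0, mul_le_mul_of_nonneg_right hk1 hs1]


private lemma amgm {K b d μ σ : ℝ} (hμ : 0 < μ) (hb : 0 ≤ b) (hd : 0 ≤ d) (hK : 0 ≤ K)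
    (hσ : 0 ≤ σ) (hσ2 : σ^2 = b*d) : 4*μ*K*σ ≤ K^2*b + 4*μ^2*d := by
  have hv2 : (4*μ*K*σ)^2 = 16*μ^2*K^2*(b*d) := by rw [← hσ2]; ring
  have hu : 0 ≤ K^2*b + 4*μ^2*d := by positivity
  have hv : 0 ≤ 4*μ*K*σ := by positivity
  nlinarith [hv2, sq_nonneg (K^2*b - 4*μ^2*d), hu, hv, mul_nonneg hu hv]

set_option maxHeartbeats 1000000 in
private lemma NstarSet_bound (k0 k1 μ : ℝ) (hμ0 : 0 < μ) {s : ℝ} (hs : 0 ≤ s)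
    {r : ℝ} (hr : r ∈ NstarSet k0 k1 μ s) : r ≤ (2*(|k0|+|k1|))^2/(8*μ^2) := by
  obtain ⟨ψ, ⟨hc, h0, h1⟩, hnz, hreq⟩ := hr
  obtain ⟨y₀, hy₀m, hy₀⟩ := hnz
  obtain ⟨a, b, d, hapos, hbpos, hdnn, hb2ad, hDd, hden, hZ⟩ := master ψ hc h0 h1 hy₀m hy₀ k0 k1
  set K := 2*(|k0|+|k1|) with hKdef
  have hKnn : 0 ≤ K := by positivity
  have hZ' : Z k0 k1 ψ ≤ K*Real.sqrt (b*d) := hZ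
  have hDψ : D ψ = d := hDd
  have hint : (∫ y in (0:ℝ)..1, (2 * (deriv ψ y)^2 + s * (ψ y)^2)) = 2*b + s*a := hden s
  have hXp : 0 < μ*(2*b+s*a) := mul_pos hμ0 (by nlinarith [mul_nonneg hs hapos.le])
  rw [hreq, hDψ, hint]
  rcases le_or_gt (Z k0 k1 ψ - μ*d) 0 with hP0 | hP0
  · have h1' : (Z k0 k1 ψ - μ*d) / (μ*(2*b+s*a)) ≤ 0 :=
      div_nonpos_iff.mpr (Or.inr ⟨hP0, hXp.le⟩)
    have h2' : (0:ℝ) ≤ K^2/(8*μ^2) := by positivity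
    linarith
  · rw [div_le_div_iff₀ hXp (by positivity : (0:ℝ) < 8*μ^2)]
    have hσnn := Real.sqrt_nonneg (b*d)
    have hσ2 : (Real.sqrt (b*d))^2 = b*d := Real.sq_sqrt (mul_nonneg hbpos.le hdnn)
    have hK4 := amgm hμ0 hbpos.le hdnn hKnn hσnn hσ2
    have h3 : 4*μ*(Z k0 k1 ψ) ≤ 4*μ*(K*Real.sqrt (b*d)) :=
      mul_le_mul_of_nonneg_left hZ' (by positivity)
    have h4 : 4*μ*(Z k0 k1 ψ - μ*d) ≤ K^2*b := by nlinarith [h3, hK4]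
    nlinarith [mul_le_mul_of_nonneg_left h4 hμ0.le,
      mul_nonneg (mul_nonneg (sq_nonneg K) hμ0.le) (mul_nonneg hs hapos.le)]

set_option maxHeartbeats 1000000 in
private lemma NstarSet_compare (k0 k1 μ s₁ s₂ : ℝ) (hμ0 : 0 < μ) (hs₁ : 0 ≤ s₁) (hs : s₁ < s₂)
    (hK : 0 < 2*(|k0|+|k1|)) {r : ℝ} (hr : r ∈ NstarSet k0 k1 μ s₂) (hrpos : 0 < r) :
    ∃ r' ∈ NstarSet k0 k1 μ s₁,
      (1 + (s₂-s₁)*μ^2/(2*(2*(|k0|+|k1|))^2 + s₁*μ^2)) * r ≤ r' := by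
  obtain ⟨ψ, hadm, hnz, hreq⟩ := hr
  obtain ⟨hc, h0, h1⟩ := id hadm
  obtain ⟨y₀, hy₀m, hy₀⟩ := id hnz
  obtain ⟨a, b, d, hapos, hbpos, hdnn, hb2ad, hDd, hden, hZ⟩ := master ψ hc h0 h1 hy₀m hy₀ k0 k1
  set K := 2*(|k0|+|k1|) with hKdef
  have hZ' : Z k0 k1 ψ ≤ K*Real.sqrt (b*d) := hZ
  have hDψ : D ψ = d := hDd
  have hX₂pos : 0 < μ*(2*b+s₂*a) :=
    mul_pos hμ0 (by nlinarith [mul_nonneg (le_of_lt (lt_of_le_of_lt hs₁ hs)) hapos.le])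
  have hX₁pos : 0 < μ*(2*b+s₁*a) := mul_pos hμ0 (by nlinarith [mul_nonneg hs₁ hapos.le])
  have hrP : r = (Z k0 k1 ψ - μ*d)/(μ*(2*b+s₂*a)) := by rw [hreq, hDψ, hden s₂]
  have hPpos : 0 < Z k0 k1 ψ - μ*d := by
    by_contra hP
    push_neg at hP
    have hle : r ≤ 0 := hrP ▸ div_nonpos_iff.mpr (Or.inr ⟨hP, hX₂pos.le⟩)
    linarith
  have hσnn := Real.sqrt_nonneg (b*d)
  have hσ2 : (Real.sqrt (b*d))^2 = b*d := Real.sq_sqrt (mul_nonneg hbpos.le hdnn)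
  have hKσ : μ*d < K*Real.sqrt (b*d) := by nlinarith [hZ']
  have hdpos : 0 < d := by
    rcases lt_or_ge 0 d with hd | hd
    · exact hd
    have hd0 : d = 0 := le_antisymm hd hdnn
    have hz : Real.sqrt (b*d) = 0 := by rw [hd0, mul_zero, Real.sqrt_zero]
    rw [hz, hd0] at hKσ
    nlinarith [hKσ]
  have hkey : μ^2*b < K^2*a := by
    have hKσpos : 0 < K*Real.sqrt (b*d) := lt_of_le_of_lt (mul_nonneg hμ0.le hdnn) hKσ
    have h1' : μ^2*d^2 < K^2*(b*d) := by nlinarith [hKσ, mul_nonneg hμ0.le hdnn, hσ2]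
    have h2' : μ^2*d < K^2*b := by nlinarith [h1', hdpos]
    nlinarith [mul_le_mul_of_nonneg_left hb2ad (sq_nonneg μ),
      mul_lt_mul_of_pos_left h2' hapos, hbpos]
  refine ⟨(Z k0 k1 ψ - μ * D ψ) /
      (μ * ∫ y in (0:ℝ)..1, (2 * (deriv ψ y)^2 + s₁ * (ψ y)^2)),
    ⟨ψ, hadm, hnz, rfl⟩, ?_⟩
  rw [hDψ, hden s₁, hrP]
  have hcpos : 0 < 2*K^2 + s₁*μ^2 := by nlinarith [hK, mul_nonneg hs₁ (sq_nonneg μ)]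
  have h5 : (s₂-s₁)*μ^2/(2*K^2 + s₁*μ^2)*(μ*(2*b+s₁*a)) ≤ μ*((s₂-s₁)*a) := by
    rw [div_mul_eq_mul_div, div_le_iff₀ hcpos]
    have h6 : 0 ≤ μ*(s₂-s₁)*(2*K^2*a - 2*μ^2*b) :=
      mul_nonneg (mul_nonneg hμ0.le (by linarith)) (by linarith [hkey])
    nlinarith [h6]
  have hθX : (1 + (s₂-s₁)*μ^2/(2*K^2 + s₁*μ^2))*(μ*(2*b+s₁*a)) ≤ μ*(2*b+s₂*a) := by
    nlinarith [h5]
  calc (1 + (s₂-s₁)*μ^2/(2*K^2 + s₁*μ^2)) * ((Z k0 k1 ψ - μ*d)/(μ*(2*b+s₂*a)))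
      = ((1 + (s₂-s₁)*μ^2/(2*K^2 + s₁*μ^2)) * (Z k0 k1 ψ - μ*d))/(μ*(2*b+s₂*a)) := by
        ring
    _ ≤ (Z k0 k1 ψ - μ*d)/(μ*(2*b+s₁*a)) := by
        rw [div_le_div_iff₀ hX₂pos hX₁pos]
        calc (1 + (s₂-s₁)*μ^2/(2*K^2 + s₁*μ^2)) * (Z k0 k1 ψ - μ*d) * (μ*(2*b+s₁*a))
            = (Z k0 k1 ψ - μ*d) * ((1 + (s₂-s₁)*μ^2/(2*K^2 + s₁*μ^2))*(μ*(2*b+s₁*a))) := by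
              ring
          _ ≤ (Z k0 k1 ψ - μ*d) * (μ*(2*b+s₂*a)) :=
              mul_le_mul_of_nonneg_left hθX hPpos.le

set_option maxHeartbeats 1000000 in
/-- if `μ_c > 0` and `0 < μ < μ_c`, the function `N*` is strictly
decreasing on `[0, ∞)`. -/
theorem Nstar_strictAnti (k0 k1 μ : ℝ) (hmuc : 0 < muc k0 k1)
    (hμ0 : 0 < μ) (hμ : μ < muc k0 k1) :
    ∀ s₁ s₂ : ℝ, 0 ≤ s₁ → s₁ < s₂ → Nstar k0 k1 μ s₂ < Nstar k0 k1 μ s₁ := by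
  intro s₁ s₂ hs₁ hs
  -- a test function with positive numerator, from μ < μ_c
  have hne : (mucSet k0 k1).Nonempty := by
    by_contra hempty
    rw [Set.not_nonempty_iff_eq_empty] at hempty
    rw [muc, hempty, Real.sSup_empty] at hmuc
    exact lt_irrefl 0 hmuc
  obtain ⟨r₀, hr₀mem, hr₀⟩ := exists_lt_of_lt_csSup hne hμ
  obtain ⟨ψ₀, hψ₀adm, hD₀, hr₀eq⟩ := hr₀mem
  have hD₀nn : 0 ≤ D ψ₀ :=
    intervalIntegral.integral_nonneg (by norm_num) (fun u _ => sq_nonneg _)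
  have hD₀pos : 0 < D ψ₀ := lt_of_le_of_ne hD₀nn (Ne.symm hD₀)
  have hP₀ : 0 < Z k0 k1 ψ₀ - μ * D ψ₀ := by
    rw [hr₀eq, lt_div_iff₀ hD₀pos] at hr₀
    linarith
  have hnz₀ : NonzeroOn01 ψ₀ := by
    by_contra hno
    unfold NonzeroOn01 at hno
    push_neg at hno
    apply hD₀
    have hd1 : ∀ y ∈ Ioo (0:ℝ) 1, deriv ψ₀ y = 0 := by
      intro y hy
      have hev : ψ₀ =ᶠ[nhds y] (fun _ => 0) := by
        filter_upwards [isOpen_Ioo.mem_nhds hy] with z hz using hno z (Ioo_subset_Icc_self hz)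
      rw [hev.deriv_eq]
      simp
    have hd2 : ∀ y ∈ Ioo (0:ℝ) 1, deriv (deriv ψ₀) y = 0 := by
      intro y hy
      have hev : deriv ψ₀ =ᶠ[nhds y] (fun _ => 0) := by
        filter_upwards [isOpen_Ioo.mem_nhds hy] with z hz using hd1 z hz
      rw [hev.deriv_eq]
      simp
    unfold D
    rw [integral_congr_Ioo (g := fun _ => (0:ℝ)) (fun y hy => by rw [hd2 y hy]; norm_num)]
    simp
  obtain ⟨y₀, hy₀m, hy₀⟩ := id hnz₀
  obtain ⟨hc₀, h00, h01⟩ := id hψ₀adm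
  obtain ⟨a₀, b₀, d₀, ha₀, hb₀, hd₀, hb2ad₀, hDd₀, hden₀, hZ₀⟩ :=
    master ψ₀ hc₀ h00 h01 hy₀m hy₀ k0 k1
  have hDψ₀ : D ψ₀ = d₀ := hDd₀
  set K := 2*(|k0|+|k1|) with hKdef
  have hKnn : 0 ≤ K := by positivity
  have hZ₀' : Z k0 k1 ψ₀ ≤ K * Real.sqrt (b₀*d₀) := hZ₀
  have hP₀' : 0 < Z k0 k1 ψ₀ - μ * d₀ := by rw [hDψ₀] at hP₀; exact hP₀
  have hKpos : 0 < K := by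
    rcases lt_or_ge 0 K with h | h
    · exact h
    have hZle : Z k0 k1 ψ₀ ≤ 0 :=
      le_trans hZ₀' (mul_nonpos_of_nonpos_of_nonneg h (Real.sqrt_nonneg _))
    nlinarith [mul_nonneg hμ0.le hd₀]
  -- the element of NstarSet s₂ coming from ψ₀
  have hX₂pos : 0 < μ*(2*b₀+s₂*a₀) :=
    mul_pos hμ0 (by nlinarith [mul_nonneg (le_of_lt (lt_of_le_of_lt hs₁ hs)) ha₀.le])
  have hmem₂ : (Z k0 k1 ψ₀ - μ * D ψ₀) /
      (μ * ∫ y in (0:ℝ)..1, (2 * (deriv ψ₀ y)^2 + s₂ * (ψ₀ y)^2)) ∈ NstarSet k0 k1 μ s₂ :=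
    ⟨ψ₀, hψ₀adm, hnz₀, rfl⟩
  have hval₂ : (Z k0 k1 ψ₀ - μ * D ψ₀) /
      (μ * ∫ y in (0:ℝ)..1, (2 * (deriv ψ₀ y)^2 + s₂ * (ψ₀ y)^2))
      = (Z k0 k1 ψ₀ - μ * d₀)/(μ*(2*b₀+s₂*a₀)) := by rw [hDψ₀, hden₀ s₂]
  have hpos₂ : 0 < (Z k0 k1 ψ₀ - μ * D ψ₀) /
      (μ * ∫ y in (0:ℝ)..1, (2 * (deriv ψ₀ y)^2 + s₂ * (ψ₀ y)^2)) := by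
    rw [hval₂]
    exact div_pos hP₀' hX₂pos
  have hbdd₂ : BddAbove (NstarSet k0 k1 μ s₂) :=
    ⟨K^2/(8*μ^2), fun r hr => NstarSet_bound k0 k1 μ hμ0 (le_of_lt (lt_of_le_of_lt hs₁ hs)) hr⟩
  have hbdd₁ : BddAbove (NstarSet k0 k1 μ s₁) :=
    ⟨K^2/(8*μ^2), fun r hr => NstarSet_bound k0 k1 μ hμ0 hs₁ hr⟩
  have hne₂ : (NstarSet k0 k1 μ s₂).Nonempty := ⟨_, hmem₂⟩
  have hN₂pos : 0 < Nstar k0 k1 μ s₂ :=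
    lt_of_lt_of_le hpos₂ (le_csSup hbdd₂ hmem₂)
  set θ := 1 + (s₂-s₁)*μ^2/(2*K^2 + s₁*μ^2) with hθdef
  have hcpos : 0 < 2*K^2 + s₁*μ^2 := by nlinarith [hKpos, mul_nonneg hs₁ (sq_nonneg μ)]
  have hθgt : 1 < θ := by
    rw [hθdef]
    have : 0 < (s₂-s₁)*μ^2/(2*K^2 + s₁*μ^2) :=
      div_pos (mul_pos (by linarith) (by positivity)) hcpos
    linarith
  have hθpos : 0 < θ := by linarith
  have hdivlt : Nstar k0 k1 μ s₂ / θ < Nstar k0 k1 μ s₂ :=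
    div_lt_self hN₂pos hθgt
  obtain ⟨r, hrmem, hrgt⟩ := exists_lt_of_lt_csSup hne₂ hdivlt
  have hrpos : 0 < r := lt_of_lt_of_le (div_pos hN₂pos hθpos) hrgt.le
  obtain ⟨r', hr'mem, hr'ge⟩ :=
    NstarSet_compare k0 k1 μ s₁ s₂ hμ0 hs₁ hs hKpos hrmem hrpos
  have hfold : (1 + (s₂-s₁)*μ^2/(2*(2*(|k0|+|k1|))^2 + s₁*μ^2)) = θ := by
    rw [hθdef, hKdef]
  rw [hfold] at hr'ge
  have hstep : Nstar k0 k1 μ s₂ < θ * r := by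
    have := mul_lt_mul_of_pos_left hrgt hθpos
    rw [mul_div_cancel₀ _ (ne_of_gt hθpos)] at this
    exact this
  calc Nstar k0 k1 μ s₂ < θ * r := hstep
    _ ≤ r' := hr'ge
    _ ≤ Nstar k0 k1 μ s₁ := le_csSup hbdd₁ hr'mem
end
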